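/- For any positive integer k and n = 2k, with ε_j ∈ F₂^k defined by (ε_j)_i = 1 iff i ⪯ j (0 ≤ i ≤ k−1), one has ε_k = Σ_{j ≺ k} ε_{n−j}, summing over all j ⪯ k with j ≠ k. -/

import Mathlib

open scoped Classical

/-- Bitwise domination: every bit of `a` is ≤ the corresponding bit of `b`. -/
def Pre (a b : ℕ) : Prop := ∀ t, a.testBit t = true → b.testBit t = true
/-- The vector `ε_i ∈ F₂^k` whose `j`-th coordinate is `1` iff `j ⪯ i`. -/
noncomputable def eps (k : ℕ) (i : ℕ) : Fin k → ZMod 2 :=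
  fun j => if Pre j.val i then 1 else 0

/-!
By Lucas's theorem mod 2, `j ⪯ s` iff `X ^ j` occurs in `(X + 1) ^ s` over `F₂`, so `ε_s`
is the truncation of `(X + 1) ^ s` below degree `k`. The same fact reads
`∑_{m ⪯ k} X ^ m = (X + 1) ^ k`; evaluating at `X + 1` gives
`∑_{m ⪯ k} (X + 1) ^ m = X ^ k`. Since `j ↦ k - j` permutes the submasks of `k`,
`∑_{j ⪯ k} (X + 1) ^ (2k - j) = (X + 1) ^ k ∑_{m ⪯ k} (X + 1) ^ m = X ^ k (X + 1) ^ k`,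
which vanishes below degree `k`; removing the term `j = k` leaves `(X + 1) ^ k` there.
-/

open Polynomial Finset

theorem pre_iff_mod_two_and_div_two {a b : ℕ} :
    Pre a b ↔ (a % 2 = 1 → b % 2 = 1) ∧ Pre (a / 2) (b / 2) := by
  have hbit0 (x : ℕ) : x.testBit 0 = true ↔ x % 2 = 1 := by simp [Nat.testBit_zero]
  simp only [Pre, ← hbit0, ← Nat.testBit_succ]
  constructor
  · exact fun h => ⟨h 0, fun t => h (t + 1)⟩
  · rintro ⟨h0, h⟩ (_ | t)
    exacts [h0, h t]

theorem pre_zero_iff {a : ℕ} : Pre a 0 ↔ a = 0 := by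
  refine ⟨fun h => Nat.eq_of_testBit_eq fun t => ?_, fun h => h ▸ fun _ => id⟩
  simpa using mt (h t)

theorem Pre.le {a b : ℕ} (h : Pre a b) : a ≤ b := by
  have hab : a &&& b = a := Nat.eq_of_testBit_eq fun t => by
    rw [Nat.testBit_and]
    cases ha : a.testBit t <;> simp [h t, ha]
  exact hab ▸ Nat.and_le_right

-- Subtracting a submask involves no borrows: `k - j` is `k` with the bits of `j` cleared.
theorem Pre.self_sub {j k : ℕ} (h : Pre j k) : Pre (k - j) k := by
  induction k using Nat.strong_induction_on generalizing j with
  | _ k ih =>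
    rcases Nat.eq_zero_or_pos k with rfl | hk
    · exact pre_zero_iff.2 (Nat.zero_sub j)
    obtain ⟨h0, h1⟩ := pre_iff_mod_two_and_div_two.1 h
    have hdiv : (k - j) / 2 = k / 2 - j / 2 := by have := h.le; have := h1.le; omega
    refine pre_iff_mod_two_and_div_two.2 ⟨fun _ => by have := h.le; omega, ?_⟩
    exact hdiv ▸ ih (k / 2) (Nat.div_lt_self hk one_lt_two) h1

theorem cast_choose_mod_two_mod_two (a b : ℕ) :
    ((a % 2).choose (b % 2) : ZMod 2) = if b % 2 = 1 → a % 2 = 1 then 1 else 0 := by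
  rcases Nat.mod_two_eq_zero_or_one a with ha | ha <;>
    rcases Nat.mod_two_eq_zero_or_one b with hb | hb <;> simp [ha, hb]

theorem coeff_X_add_one_pow_zmod_two (s t : ℕ) :
    ((X + 1 : (ZMod 2)[X]) ^ s).coeff t = if Pre t s then 1 else 0 := by
  rw [coeff_X_add_one_pow]
  induction s using Nat.strong_induction_on generalizing t with
  | _ s ih =>
    rcases Nat.eq_zero_or_pos s with rfl | hs
    · rcases t with _ | t <;> simp [pre_zero_iff]
    rw [(ZMod.natCast_eq_natCast_iff _ _ _).2 Choose.choose_modEq_choose_mod_mul_choose_div_nat,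
      Nat.cast_mul, cast_choose_mod_two_mod_two, ih _ (Nat.div_lt_self hs one_lt_two),
      ite_zero_mul_ite_zero, one_mul]
    exact if_congr pre_iff_mod_two_and_div_two.symm rfl rfl

noncomputable def submasks (k : ℕ) : Finset ℕ := (range (k + 1)).filter (Pre · k)

theorem mem_submasks {m k : ℕ} : m ∈ submasks k ↔ Pre m k := by
  simpa [submasks, Nat.lt_succ_iff] using Pre.le

theorem sum_submasks_self_sub {M : Type*} [AddCommMonoid M] (k : ℕ) (f : ℕ → M) :
    ∑ j ∈ submasks k, f (k - j) = ∑ m ∈ submasks k, f m := by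
  refine sum_nbij' (k - ·) (k - ·) (fun j hj => ?_) (fun j hj => ?_) (fun j hj => ?_)
    (fun j hj => ?_) (fun _ _ => rfl) <;>
  simp only [mem_submasks] at hj ⊢
  all_goals first | exact hj.self_sub | have := hj.le; omega

theorem sum_submasks_X_pow (k : ℕ) :
    ∑ m ∈ submasks k, (X : (ZMod 2)[X]) ^ m = (X + 1) ^ k := by
  ext t
  simp [coeff_X_pow, coeff_X_add_one_pow_zmod_two, mem_submasks]

theorem sum_submasks_pow {R : Type*} [CommRing R] [CharP R 2] (k : ℕ) (x : R) :
    ∑ m ∈ submasks k, x ^ m = (x + 1) ^ k := by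
  simpa only [eval₂_finsetSum, eval₂_pow, eval₂_add, eval₂_X, eval₂_one] using
    congrArg (eval₂ (ZMod.castHom dvd_rfl R) x) (sum_submasks_X_pow k)

theorem eps_apply (k s : ℕ) (t : Fin k) : eps k s t = ((X + 1 : (ZMod 2)[X]) ^ s).coeff t :=
  (coeff_X_add_one_pow_zmod_two s t).symm

theorem sum_erase_submasks_X_add_one_pow (k : ℕ) :
    ∑ j ∈ (submasks k).erase k, (X + 1 : (ZMod 2)[X]) ^ (2 * k - j) =
      X ^ k * (X + 1) ^ k + (X + 1) ^ k := by
  have hsum :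
      ∑ j ∈ submasks k, (X + 1 : (ZMod 2)[X]) ^ (2 * k - j) = (X + 1) ^ k * X ^ k := by
    calc ∑ j ∈ submasks k, (X + 1 : (ZMod 2)[X]) ^ (2 * k - j)
        = ∑ j ∈ submasks k, (X + 1) ^ k * (X + 1) ^ (k - j) := by
          refine sum_congr rfl fun j hj => ?_
          rw [← pow_add, (by have := (mem_submasks.1 hj).le; omega : k + (k - j) = 2 * k - j)]
      _ = (X + 1) ^ k * X ^ k := by
          rw [← mul_sum, sum_submasks_self_sub k fun m => (X + 1 : (ZMod 2)[X]) ^ m,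
            sum_submasks_pow, add_assoc, CharTwo.add_self_eq_zero, add_zero]
  rw [sum_erase_eq_sub (mem_submasks.2 fun _ => id), hsum, Nat.two_mul, Nat.add_sub_cancel,
    CharTwo.sub_eq_add, mul_comm]

theorem stmt19_general (k : ℕ) (n : ℕ) (hn : n = 2 * k) :
    eps k k =
      ∑ j ∈ (Finset.range (k+1)).filter (fun j => Pre j k ∧ j ≠ k), eps k (n - j) := by
  subst hn
  have hfilter : (range (k + 1)).filter (fun j => Pre j k ∧ j ≠ k) = (submasks k).erase k := by
    ext j
    simp only [submasks, mem_filter, mem_erase]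
    tauto
  funext t
  rw [Finset.sum_apply, hfilter]
  simp only [eps_apply]
  rw [← finsetSum_coeff, sum_erase_submasks_X_add_one_pow, coeff_add, coeff_X_pow_mul',
    if_neg (not_le.2 t.isLt), zero_add]

theorem stmt19 (k : ℕ) (hk : 0 < k) (n : ℕ) (hn : n = 2 * k) :
    eps k k =
      ∑ j ∈ (Finset.range (k+1)).filter (fun j => Pre j k ∧ j ≠ k), eps k (n - j) :=
  stmt19_general k n hn
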